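/- arXiv:1112.1633 — 3 statements merged into one kernel-verified Lean document; each statement's English description precedes it below -/
import Mathlib

section
/- For every k ≥ 0 and every x ∈ [a,b], the formal power X̃⁽²ᵏ⁾ satisfies the bound |X̃⁽²ᵏ⁾(x)| ≤ (max_{[a,b]} |r u0²|)ᵏ · (max_{[a,b]} |1/(p u0²)|)ᵏ · (b−a)²ᵏ / (2k)!. Consequently the series Σ_{k=0}^∞ λᵏ X̃⁽²ᵏ⁾ is majorized by the convergent numerical series Σ_{k=0}^∞ cᵏ/(2k)! with c = |λ| (max_{[a,b]} |r u0²|)(max_{[a,b]} |1/(p u0²)|)(b−a)². -/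
open Set MeasureTheory Filter Finset
open scoped Topology Interval

/-- Formal powers defined by recursive integration: at step `n+1` the integrand is
multiplied by `wOdd` if `n+1` is odd and by `wEven` if `n+1` is even. -/
noncomputable def formalPower (wOdd wEven : ℝ → ℂ) (x0 : ℝ) : ℕ → ℝ → ℂ
  | 0 => fun _ => 1
  | n + 1 => fun x => ∫ s in x0..x,
      formalPower wOdd wEven x0 n s * (if (n + 1) % 2 = 1 then wOdd s else wEven s)

/-- The formal powers `X̃⁽ⁿ⁾` associated with the Sturm-Liouville equation
`(p u')' + q u = λ r u` and a particular solution `u0`. -/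
noncomputable def XtSL (p r u0 : ℝ → ℂ) (x0 : ℝ) : ℕ → ℝ → ℂ :=
  formalPower (fun s => u0 s ^ 2 * r s) (fun s => 1 / (u0 s ^ 2 * p s)) x0

/-- The formal powers `X⁽ⁿ⁾`. -/
noncomputable def XSL (p r u0 : ℝ → ℂ) (x0 : ℝ) : ℕ → ℝ → ℂ :=
  formalPower (fun s => 1 / (u0 s ^ 2 * p s)) (fun s => u0 s ^ 2 * r s) x0

/-- `u` solves `(p u')' + q u = g` on `(a,b)`, with the implied differentiability. -/
def SolvesSL (p q : ℝ → ℂ) (a b : ℝ) (u g : ℝ → ℂ) : Prop :=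
  (∀ x ∈ Set.Ioo a b, DifferentiableAt ℝ u x) ∧
  (∀ x ∈ Set.Ioo a b, DifferentiableAt ℝ (fun y => p y * deriv u y) x) ∧
  ∀ x ∈ Set.Ioo a b, deriv (fun y => p y * deriv u y) x + q x * u x = g x

/-!
Each formal power is an iterated integral of products of the two weights, so bounding the weights
by their maxima `M₁ = max |r u₀²|`, `M₂ = max |1/(p u₀²)|` and integrating `|s - x₀|ⁿ` at each step
gives `|X̃⁽ⁿ⁾(x)| ≤ M₁^⌈n/2⌉ M₂^⌊n/2⌋ |x - x₀|ⁿ / n!`. For `n = 2k` this is the claimed estimate,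
and `cᵏ/(2k)! ≤ |c|ᵏ/k!` makes the majorant series summable.
-/

lemma norm_intervalIntegral_le_mul_abs_sub_pow {E : Type*} [NormedAddCommGroup E]
    [NormedSpace ℝ E] {f : ℝ → E} {x0 x C : ℝ} {n : ℕ}
    (hf : ∀ s ∈ Ι x0 x, ‖f s‖ ≤ C * |s - x0| ^ n) :
    ‖∫ s in x0..x, f s‖ ≤ C * (|x - x0| ^ (n + 1) / (n + 1)) := by
  have hg : IntegrableOn (fun s => C * |s - x0| ^ n) (Ι x0 x) :=
    (continuous_const.mul ((continuous_id.sub continuous_const).abs.pow n)).integrableOn_uIoc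
  calc ‖∫ s in x0..x, f s‖ = ‖∫ s in Ι x0 x, f s‖ :=
        intervalIntegral.norm_integral_eq_norm_integral_uIoc f
    _ ≤ ∫ s in Ι x0 x, C * |s - x0| ^ n :=
        norm_integral_le_of_norm_le hg ((ae_restrict_iff' measurableSet_uIoc).2 (ae_of_all _ hf))
    _ = C * (|x - x0| ^ (n + 1) / (n + 1)) := by
        rw [integral_const_mul, integral_pow_abs_sub_uIoc]

lemma ite_mul_pow_div_two_mul_pow_div_two {M : Type*} [CommMonoid M] (m₁ m₂ : M) (n : ℕ) :
    (if (n + 1) % 2 = 1 then m₁ else m₂) * (m₁ ^ ((n + 1) / 2) * m₂ ^ (n / 2)) =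
      m₁ ^ ((n + 2) / 2) * m₂ ^ ((n + 1) / 2) := by
  obtain ⟨m, rfl | rfl⟩ := Nat.even_or_odd' n
  · rw [if_pos (by omega), show (2 * m + 1) / 2 = m by omega, show 2 * m / 2 = m by omega,
      show (2 * m + 2) / 2 = m + 1 by omega]
    simp only [pow_succ]
    ac_rfl
  · rw [if_neg (by omega), show (2 * m + 1 + 1) / 2 = m + 1 by omega,
      show (2 * m + 1) / 2 = m by omega, show (2 * m + 1 + 2) / 2 = m + 1 by omega]
    simp only [pow_succ]
    ac_rfl

section formalPower

variable {wOdd wEven : ℝ → ℂ} {a b x0 M₁ M₂ : ℝ}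

lemma norm_formalPower_le (hx0 : x0 ∈ Icc a b)
    (hM₁ : ∀ s ∈ Icc a b, ‖wOdd s‖ ≤ M₁) (hM₂ : ∀ s ∈ Icc a b, ‖wEven s‖ ≤ M₂) (n : ℕ) :
    ∀ x ∈ Icc a b, ‖formalPower wOdd wEven x0 n x‖ ≤
      M₁ ^ ((n + 1) / 2) * M₂ ^ (n / 2) * |x - x0| ^ n / n.factorial := by
  induction n with
  | zero => simp [formalPower]
  | succ n ih =>
    intro x hx
    have hweight : ∀ s ∈ Icc a b, ‖if (n + 1) % 2 = 1 then wOdd s else wEven s‖ ≤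
        if (n + 1) % 2 = 1 then M₁ else M₂ := by
      intro s hs
      split_ifs
      exacts [hM₁ s hs, hM₂ s hs]
    have hintegrand : ∀ s ∈ Ι x0 x,
        ‖formalPower wOdd wEven x0 n s * (if (n + 1) % 2 = 1 then wOdd s else wEven s)‖ ≤
          (if (n + 1) % 2 = 1 then M₁ else M₂) * (M₁ ^ ((n + 1) / 2) * M₂ ^ (n / 2)) /
            n.factorial * |s - x0| ^ n := by
      intro s hs
      have hs' : s ∈ Icc a b := uIcc_subset_Icc hx0 hx (uIoc_subset_uIcc hs)
      have hprev := ih s hs'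
      rw [norm_mul]
      calc _ ≤ M₁ ^ ((n + 1) / 2) * M₂ ^ (n / 2) * |s - x0| ^ n / n.factorial *
            (if (n + 1) % 2 = 1 then M₁ else M₂) :=
            mul_le_mul hprev (hweight s hs') (norm_nonneg _) ((norm_nonneg _).trans hprev)
        _ = _ := by ring
    calc ‖formalPower wOdd wEven x0 (n + 1) x‖
        ≤ _ := norm_intervalIntegral_le_mul_abs_sub_pow hintegrand
      _ = M₁ ^ ((n + 2) / 2) * M₂ ^ ((n + 1) / 2) * |x - x0| ^ (n + 1) / (n + 1).factorial := by
        rw [ite_mul_pow_div_two_mul_pow_div_two, Nat.factorial_succ]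
        push_cast
        field_simp

lemma norm_formalPower_two_mul_le (hx0 : x0 ∈ Icc a b)
    (hM₁ : ∀ s ∈ Icc a b, ‖wOdd s‖ ≤ M₁) (hM₂ : ∀ s ∈ Icc a b, ‖wEven s‖ ≤ M₂)
    (k : ℕ) {x : ℝ} (hx : x ∈ Icc a b) :
    ‖formalPower wOdd wEven x0 (2 * k) x‖ ≤
      M₁ ^ k * M₂ ^ k * (b - a) ^ (2 * k) / (2 * k).factorial := by
  have hbound := norm_formalPower_le hx0 hM₁ hM₂ (2 * k) x hx
  rw [show (2 * k + 1) / 2 = k by omega, show 2 * k / 2 = k by omega] at hbound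
  refine hbound.trans (div_le_div_of_nonneg_right ?_ (Nat.cast_nonneg _))
  have hdist : |x - x0| ≤ b - a := Real.dist_le_of_mem_Icc hx hx0
  have hM : 0 ≤ M₁ ^ k * M₂ ^ k :=
    mul_nonneg (pow_nonneg ((norm_nonneg _).trans (hM₁ x hx)) k)
      (pow_nonneg ((norm_nonneg _).trans (hM₂ x hx)) k)
  exact mul_le_mul_of_nonneg_left (pow_le_pow_left₀ (abs_nonneg _) hdist _) hM

end formalPower

lemma norm_le_sSup_image_norm {α E : Type*} [TopologicalSpace α] [SeminormedAddCommGroup E]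
    {f : α → E} {K : Set α} (hK : IsCompact K) (hf : ContinuousOn f K) {x : α} (hx : x ∈ K) :
    ‖f x‖ ≤ sSup ((fun y => ‖f y‖) '' K) :=
  le_csSup (hK.bddAbove_image hf.norm) (mem_image_of_mem _ hx)

lemma summable_pow_div_factorial_two_mul (c : ℝ) :
    Summable fun k : ℕ => c ^ k / (2 * k).factorial := by
  refine (Real.summable_pow_div_factorial |c|).of_norm_bounded fun k => ?_
  rw [norm_div, norm_pow, Real.norm_eq_abs, Real.norm_natCast]
  exact div_le_div_of_nonneg_left (by positivity) (by positivity)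
    (by exact_mod_cast Nat.factorial_le (by omega))

theorem spps_Xt_estimate_general
    (a b x0 : ℝ) (p r u0 : ℝ → ℂ) (lam : ℂ)
    (hc1 : ContinuousOn (fun x => u0 x ^ 2 * r x) (Set.Icc a b))
    (hc2 : ContinuousOn (fun x => 1 / (u0 x ^ 2 * p x)) (Set.Icc a b))
    (hx0 : x0 ∈ Set.Icc a b) :
    (∀ k : ℕ, ∀ x ∈ Set.Icc a b,
      ‖XtSL p r u0 x0 (2 * k) x‖ ≤
        (sSup ((fun x => ‖u0 x ^ 2 * r x‖) '' Set.Icc a b)) ^ k *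
        (sSup ((fun x => ‖1 / (u0 x ^ 2 * p x)‖) '' Set.Icc a b)) ^ k *
        (b - a) ^ (2 * k) / (Nat.factorial (2 * k)) ) ∧
    (∀ k : ℕ, ∀ x ∈ Set.Icc a b,
      ‖lam ^ k * XtSL p r u0 x0 (2 * k) x‖ ≤
        (‖lam‖ *
          (sSup ((fun x => ‖u0 x ^ 2 * r x‖) '' Set.Icc a b)) *
          (sSup ((fun x => ‖1 / (u0 x ^ 2 * p x)‖) '' Set.Icc a b)) *
          (b - a) ^ 2) ^ k / (Nat.factorial (2 * k)) ) ∧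
    Summable (fun k : ℕ =>
      (‖lam‖ *
        (sSup ((fun x => ‖u0 x ^ 2 * r x‖) '' Set.Icc a b)) *
        (sSup ((fun x => ‖1 / (u0 x ^ 2 * p x)‖) '' Set.Icc a b)) *
        (b - a) ^ 2) ^ k / (Nat.factorial (2 * k))) := by
  set M₁ := sSup ((fun x => ‖u0 x ^ 2 * r x‖) '' Set.Icc a b)
  set M₂ := sSup ((fun x => ‖1 / (u0 x ^ 2 * p x)‖) '' Set.Icc a b)
  have hXt : ∀ k : ℕ, ∀ x ∈ Set.Icc a b,
      ‖XtSL p r u0 x0 (2 * k) x‖ ≤ M₁ ^ k * M₂ ^ k * (b - a) ^ (2 * k) / (2 * k).factorial :=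
    fun k x hx => norm_formalPower_two_mul_le hx0
      (fun s hs => norm_le_sSup_image_norm isCompact_Icc hc1 hs)
      (fun s hs => norm_le_sSup_image_norm isCompact_Icc hc2 hs) k hx
  refine ⟨hXt, fun k x hx => ?_, summable_pow_div_factorial_two_mul _⟩
  calc ‖lam ^ k * XtSL p r u0 x0 (2 * k) x‖ = ‖lam‖ ^ k * ‖XtSL p r u0 x0 (2 * k) x‖ := by
        rw [norm_mul, norm_pow]
    _ ≤ ‖lam‖ ^ k * (M₁ ^ k * M₂ ^ k * (b - a) ^ (2 * k) / (2 * k).factorial) := by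
        gcongr
        exact hXt k x hx
    _ = (‖lam‖ * M₁ * M₂ * (b - a) ^ 2) ^ k / (2 * k).factorial := by
        rw [mul_pow, mul_pow, mul_pow, ← pow_mul]
        ring

theorem spps_Xt_estimate
    (a b x0 : ℝ) (hab : a < b) (p q r u0 : ℝ → ℂ) (lam : ℂ)
    (hu0ne : ∀ x ∈ Set.Icc a b, u0 x ≠ 0)
    (hu0sol : SolvesSL p q a b u0 (fun _ => 0))
    (hc1 : ContinuousOn (fun x => u0 x ^ 2 * r x) (Set.Icc a b))
    (hc2 : ContinuousOn (fun x => 1 / (u0 x ^ 2 * p x)) (Set.Icc a b))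
    (hx0 : x0 ∈ Set.Icc a b) (hpc : ContinuousAt p x0) (hp0 : p x0 ≠ 0) :
    (∀ k : ℕ, ∀ x ∈ Set.Icc a b,
      ‖XtSL p r u0 x0 (2 * k) x‖ ≤
        (sSup ((fun x => ‖u0 x ^ 2 * r x‖) '' Set.Icc a b)) ^ k *
        (sSup ((fun x => ‖1 / (u0 x ^ 2 * p x)‖) '' Set.Icc a b)) ^ k *
        (b - a) ^ (2 * k) / (Nat.factorial (2 * k)) ) ∧
    (∀ k : ℕ, ∀ x ∈ Set.Icc a b,
      ‖lam ^ k * XtSL p r u0 x0 (2 * k) x‖ ≤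
        (‖lam‖ *
          (sSup ((fun x => ‖u0 x ^ 2 * r x‖) '' Set.Icc a b)) *
          (sSup ((fun x => ‖1 / (u0 x ^ 2 * p x)‖) '' Set.Icc a b)) *
          (b - a) ^ 2) ^ k / (Nat.factorial (2 * k)) ) ∧
    Summable (fun k : ℕ =>
      (‖lam‖ *
        (sSup ((fun x => ‖u0 x ^ 2 * r x‖) '' Set.Icc a b)) *
        (sSup ((fun x => ‖1 / (u0 x ^ 2 * p x)‖) '' Set.Icc a b)) *
        (b - a) ^ 2) ^ k / (Nat.factorial (2 * k))) :=
  spps_Xt_estimate_general a b x0 p r u0 lam hc1 hc2 hx0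
end

section
/- Suppose u : ℝ → ℂ is a continuously differentiable solution of u'' + (k² n(x)² − β²) u = 0 on ℝ such that u(x) = e^{−i k1 x} + R e^{i k1 x} for x ≤ 0 and u(x) = T e^{−i k2 x} for x ≥ d, for some complex constants R and T. If the quantity [y1'(d) − k1 k2 y2(d)] + i[k2 y1(d) + k1 y2'(d)] is nonzero, then R = ( −k1 k2 y2(d) − y1'(d) − i k2 y1(d) + i k1 y2'(d) ) / ( [y1'(d) − k1 k2 y2(d)] + i[k2 y1(d) + k1 y2'(d)] ) and T = 2 i k1 ( y1(d) y2'(d) − y1'(d) y2(d) ) e^{i k2 d} / ( [y1'(d) − k1 k2 y2(d)] + i[k2 y1(d) + k1 y2'(d)] ). -/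
/-!
On `[0, d]` the wave `u` equals `u 0 • y1 + u' 0 • y2`, because both sides solve the same linear
first-order system for `(u, u')` with the same initial data. The incoming and reflected waves give
`u 0 = 1 + R` and `u' 0 = i k1 (R - 1)`, the transmitted wave gives `u d` and `u' d`, so matching at
`d` yields two linear equations for `R` and `T`. Their determinant is the stated denominator times
`e^{-i k2 d}`, and Cramer's rule gives the formulas.
-/

open Set Complex

/-- `f'` stands for the derivative of `f`: the pair is a trajectory on `s` of the first-order
system equivalent to `f'' + q f = 0`. -/
def IsHelmholtzSolutionOn (q : ℝ → ℂ) (s : Set ℝ) (f f' : ℝ → ℂ) : Prop :=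
  ∀ x ∈ s, HasDerivAt f (f' x) x ∧ HasDerivAt f' (-q x * f x) x

theorem lipschitzWith_companion (c : ℂ) :
    LipschitzWith (max 1 ‖c‖₊) (fun p : ℂ × ℂ => (p.2, -c * p.1)) := by
  have h := (LipschitzWith.prod_snd (α := ℂ) (β := ℂ)).prodMk
    ((lipschitzWith_smul (-c)).comp (LipschitzWith.prod_fst (α := ℂ) (β := ℂ)))
  rwa [nnnorm_neg, mul_one] at h

namespace IsHelmholtzSolutionOn

variable {q : ℝ → ℂ} {s : Set ℝ}

theorem of_deriv {f : ℝ → ℂ} (hf : Differentiable ℝ f) (hf' : Differentiable ℝ (deriv f))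
    (heq : ∀ x ∈ s, deriv (deriv f) x + q x * f x = 0) :
    IsHelmholtzSolutionOn q s f (deriv f) := fun x hx =>
  ⟨(hf x).hasDerivAt, by
    rw [show -q x * f x = deriv (deriv f) x by linear_combination -heq x hx]
    exact (hf' x).hasDerivAt⟩

theorem linearCombination {f f' g g' : ℝ → ℂ} (hf : IsHelmholtzSolutionOn q s f f')
    (hg : IsHelmholtzSolutionOn q s g g') (a b : ℂ) :
    IsHelmholtzSolutionOn q s (fun x => a * f x + b * g x) (fun x => a * f' x + b * g' x) :=
  fun x hx => by
    obtain ⟨hf₁, hf₂⟩ := hf x hx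
    obtain ⟨hg₁, hg₂⟩ := hg x hx
    exact ⟨(hf₁.const_mul a).add (hg₁.const_mul b),
      ((hf₂.const_mul a).add (hg₂.const_mul b)).congr_deriv (by ring)⟩

theorem eqOn_Icc {a b : ℝ} (hq : ContinuousOn q (Icc a b)) {f f' g g' : ℝ → ℂ}
    (hf : IsHelmholtzSolutionOn q (Icc a b) f f') (hg : IsHelmholtzSolutionOn q (Icc a b) g g')
    (ha : f a = g a) (ha' : f' a = g' a) :
    EqOn f g (Icc a b) ∧ EqOn f' g' (Icc a b) := by
  obtain ⟨C, hC⟩ := isCompact_Icc.exists_bound_of_continuousOn hq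
  have hv : ∀ t ∈ Ico a b,
      LipschitzOnWith (max 1 C.toNNReal) (fun p : ℂ × ℂ => (p.2, -q t * p.1)) univ := by
    intro t ht
    refine ((lipschitzWith_companion (q t)).weaken (max_le_max le_rfl ?_)).lipschitzOnWith
    simpa using Real.toNNReal_le_toNNReal (hC t (Ico_subset_Icc_self ht))
  have phase {f f'} (hf : IsHelmholtzSolutionOn q (Icc a b) f f') (t) (ht : t ∈ Icc a b) :
      HasDerivAt (fun x => (f x, f' x)) (f' t, -q t * f t) t :=
    (hf t ht).1.prodMk (hf t ht).2
  have key := ODE_solution_unique_of_mem_Icc_right hv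
    (fun t ht => (phase hf t ht).continuousAt.continuousWithinAt)
    (fun t ht => (phase hf t (Ico_subset_Icc_self ht)).hasDerivWithinAt) (fun _ _ => mem_univ _)
    (fun t ht => (phase hg t ht).continuousAt.continuousWithinAt)
    (fun t ht => (phase hg t (Ico_subset_Icc_self ht)).hasDerivWithinAt) (fun _ _ => mem_univ _)
    (Prod.ext ha ha')
  exact ⟨fun t ht => congrArg Prod.fst (key ht), fun t ht => congrArg Prod.snd (key ht)⟩

theorem eq_fundamental_combination {a b : ℝ} (hq : ContinuousOn q (Icc a b))
    {u u' y₁ y₁' y₂ y₂' : ℝ → ℂ} (hu : IsHelmholtzSolutionOn q (Icc a b) u u')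
    (hy₁ : IsHelmholtzSolutionOn q (Icc a b) y₁ y₁') (hy₂ : IsHelmholtzSolutionOn q (Icc a b) y₂ y₂')
    (hy₁a : y₁ a = 1) (hy₁a' : y₁' a = 0) (hy₂a : y₂ a = 0) (hy₂a' : y₂' a = 1)
    {x : ℝ} (hx : x ∈ Icc a b) :
    u x = u a * y₁ x + u' a * y₂ x ∧ u' x = u a * y₁' x + u' a * y₂' x := by
  have h := hu.eqOn_Icc hq (hy₁.linearCombination hy₂ (u a) (u' a))
    (by simp [hy₁a, hy₂a]) (by simp [hy₁a', hy₂a'])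
  exact ⟨h.1 hx, h.2 hx⟩

end IsHelmholtzSolutionOn

theorem deriv_eq_of_eqOn_of_hasDerivWithinAt {𝕜 F : Type*} [NontriviallyNormedField 𝕜]
    [NormedAddCommGroup F] [NormedSpace 𝕜 F] {u g : 𝕜 → F} {g' : F} {s : Set 𝕜} {x : 𝕜}
    (hs : UniqueDiffWithinAt 𝕜 s x) (hx : x ∈ s) (hu : DifferentiableAt 𝕜 u x) (hug : EqOn u g s)
    (hg : HasDerivWithinAt g g' s x) : deriv u x = g' := by
  rw [← hu.derivWithin hs, derivWithin_congr hug (hug hx), hg.derivWithin hs]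

theorem hasDerivAt_cexp_mul_ofReal (c : ℂ) (x : ℝ) :
    HasDerivAt (fun t : ℝ => exp (c * t)) (c * exp (c * x)) x := by
  simpa [mul_comm] using ((hasDerivAt_id x).ofReal_comp.const_mul c).cexp

theorem reflection_transmission_of_matching {k₁ k₂ R T y₁ y₁' y₂ y₂' e e' : ℂ} (he : e * e' = 1)
    (hden : (y₁' - k₁ * k₂ * y₂) + I * (k₂ * y₁ + k₁ * y₂') ≠ 0)
    (h₁ : T * e = (1 + R) * y₁ + I * k₁ * (R - 1) * y₂)
    (h₂ : T * (-I * k₂ * e) = (1 + R) * y₁' + I * k₁ * (R - 1) * y₂') :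
    R = (-k₁ * k₂ * y₂ - y₁' - I * k₂ * y₁ + I * k₁ * y₂') /
        ((y₁' - k₁ * k₂ * y₂) + I * (k₂ * y₁ + k₁ * y₂')) ∧
    T = 2 * I * k₁ * (y₁ * y₂' - y₁' * y₂) * e' /
        ((y₁' - k₁ * k₂ * y₂) + I * (k₂ * y₁ + k₁ * y₂')) := by
  have hR : R * ((y₁' - k₁ * k₂ * y₂) + I * (k₂ * y₁ + k₁ * y₂')) =
      -k₁ * k₂ * y₂ - y₁' - I * k₂ * y₁ + I * k₁ * y₂' := by
    linear_combination -h₂ - I * k₂ * h₁ + (1 - R) * k₁ * k₂ * y₂ * I_sq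
  refine ⟨(eq_div_iff hden).2 hR, (eq_div_iff hden).2 ?_⟩
  linear_combination e' * ((y₁' - k₁ * k₂ * y₂) + I * (k₂ * y₁ + k₁ * y₂')) * h₁
      - T * ((y₁' - k₁ * k₂ * y₂) + I * (k₂ * y₁ + k₁ * y₂')) * he
      + e' * y₁ * hR + I * k₁ * e' * y₂ * hR - 2 * k₁ * k₂ * y₂ * y₁ * e' * I_sq

theorem reflection_transmission_coefficients_general
    (k beta d n1 n2 : ℝ) (hd : 0 < d)
    (n : ℝ → ℝ) (hn : Continuous n)
    (y1 y2 : ℝ → ℂ)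
    (hy1d : Differentiable ℝ y1) (hy1d2 : Differentiable ℝ (deriv y1))
    (hy1eq : ∀ x ∈ Set.Icc 0 d,
      deriv (deriv y1) x + ((k : ℂ) ^ 2 * (n x : ℂ) ^ 2 - (beta : ℂ) ^ 2) * y1 x = 0)
    (hy1i : y1 0 = 1) (hy1i' : deriv y1 0 = 0)
    (hy2d : Differentiable ℝ y2) (hy2d2 : Differentiable ℝ (deriv y2))
    (hy2eq : ∀ x ∈ Set.Icc 0 d,
      deriv (deriv y2) x + ((k : ℂ) ^ 2 * (n x : ℂ) ^ 2 - (beta : ℂ) ^ 2) * y2 x = 0)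
    (hy2i : y2 0 = 0) (hy2i' : deriv y2 0 = 1)
    (u : ℝ → ℂ) (R T : ℂ)
    (hud : Differentiable ℝ u) (hud2 : Differentiable ℝ (deriv u))
    (hueq : ∀ x : ℝ,
      deriv (deriv u) x + ((k : ℂ) ^ 2 * (n x : ℂ) ^ 2 - (beta : ℂ) ^ 2) * u x = 0)
    (huleft : ∀ x ≤ (0 : ℝ),
      u x = Complex.exp (-Complex.I * (Real.sqrt (k ^ 2 * n1 ^ 2 - beta ^ 2) : ℂ) * x) +
        R * Complex.exp (Complex.I * (Real.sqrt (k ^ 2 * n1 ^ 2 - beta ^ 2) : ℂ) * x))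
    (huright : ∀ x ≥ d,
      u x = T * Complex.exp (-Complex.I * (Real.sqrt (k ^ 2 * n2 ^ 2 - beta ^ 2) : ℂ) * x))
    (hden : (deriv y1 d -
        (Real.sqrt (k ^ 2 * n1 ^ 2 - beta ^ 2) : ℂ) *
          (Real.sqrt (k ^ 2 * n2 ^ 2 - beta ^ 2) : ℂ) * y2 d) +
      Complex.I * ((Real.sqrt (k ^ 2 * n2 ^ 2 - beta ^ 2) : ℂ) * y1 d +
        (Real.sqrt (k ^ 2 * n1 ^ 2 - beta ^ 2) : ℂ) * deriv y2 d) ≠ 0) :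
    R = (-(Real.sqrt (k ^ 2 * n1 ^ 2 - beta ^ 2) : ℂ) *
          (Real.sqrt (k ^ 2 * n2 ^ 2 - beta ^ 2) : ℂ) * y2 d - deriv y1 d -
          Complex.I * (Real.sqrt (k ^ 2 * n2 ^ 2 - beta ^ 2) : ℂ) * y1 d +
          Complex.I * (Real.sqrt (k ^ 2 * n1 ^ 2 - beta ^ 2) : ℂ) * deriv y2 d) /
        ((deriv y1 d -
          (Real.sqrt (k ^ 2 * n1 ^ 2 - beta ^ 2) : ℂ) *
            (Real.sqrt (k ^ 2 * n2 ^ 2 - beta ^ 2) : ℂ) * y2 d) +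
        Complex.I * ((Real.sqrt (k ^ 2 * n2 ^ 2 - beta ^ 2) : ℂ) * y1 d +
          (Real.sqrt (k ^ 2 * n1 ^ 2 - beta ^ 2) : ℂ) * deriv y2 d)) ∧
    T = 2 * Complex.I * (Real.sqrt (k ^ 2 * n1 ^ 2 - beta ^ 2) : ℂ) *
          (y1 d * deriv y2 d - deriv y1 d * y2 d) *
          Complex.exp (Complex.I * (Real.sqrt (k ^ 2 * n2 ^ 2 - beta ^ 2) : ℂ) * d) /
        ((deriv y1 d -
          (Real.sqrt (k ^ 2 * n1 ^ 2 - beta ^ 2) : ℂ) *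
            (Real.sqrt (k ^ 2 * n2 ^ 2 - beta ^ 2) : ℂ) * y2 d) +
        Complex.I * ((Real.sqrt (k ^ 2 * n2 ^ 2 - beta ^ 2) : ℂ) * y1 d +
          (Real.sqrt (k ^ 2 * n1 ^ 2 - beta ^ 2) : ℂ) * deriv y2 d)) := by
  set k₁ : ℂ := (Real.sqrt (k ^ 2 * n1 ^ 2 - beta ^ 2) : ℂ)
  set k₂ : ℂ := (Real.sqrt (k ^ 2 * n2 ^ 2 - beta ^ 2) : ℂ)
  have hq : ContinuousOn (fun x => (k : ℂ) ^ 2 * (n x : ℂ) ^ 2 - (beta : ℂ) ^ 2) (Icc 0 d) := by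
    fun_prop
  obtain ⟨hu_d, hu'_d⟩ :=
    (IsHelmholtzSolutionOn.of_deriv hud hud2 fun x _ => hueq x).eq_fundamental_combination hq
      (.of_deriv hy1d hy1d2 hy1eq) (.of_deriv hy2d hy2d2 hy2eq) hy1i hy1i' hy2i hy2i'
      (right_mem_Icc.2 hd.le)
  have hu_0 : u 0 = 1 + R := by simpa using huleft 0 le_rfl
  have hu'_0 : deriv u 0 = I * k₁ * (R - 1) :=
    deriv_eq_of_eqOn_of_hasDerivWithinAt (uniqueDiffOn_Iic 0 0 self_mem_Iic) self_mem_Iic (hud 0)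
      (fun x hx => huleft x hx) ((((hasDerivAt_cexp_mul_ofReal _ 0).add
        ((hasDerivAt_cexp_mul_ofReal _ 0).const_mul R)).congr_deriv (by simp only [ofReal_zero, mul_zero, exp_zero]; ring)).hasDerivWithinAt)
  have hu'_d_right : deriv u d = T * (-I * k₂ * exp (-I * k₂ * d)) :=
    deriv_eq_of_eqOn_of_hasDerivWithinAt (uniqueDiffOn_Ici d d self_mem_Ici) self_mem_Ici (hud d)
      (fun x hx => huright x hx) ((hasDerivAt_cexp_mul_ofReal _ d).const_mul T).hasDerivWithinAt
  rw [huright d le_rfl, hu_0, hu'_0] at hu_d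
  rw [hu'_d_right, hu_0, hu'_0] at hu'_d
  exact reflection_transmission_of_matching (e := exp (-I * k₂ * d)) (e' := exp (I * k₂ * d))
    (by rw [← exp_add]; simp) hden hu_d hu'_d

theorem reflection_transmission_coefficients
    (k beta d n1 n2 : ℝ) (hk : 0 < k) (hd : 0 < d)
    (n : ℝ → ℝ) (hn : Continuous n)
    (hn1 : ∀ x ≤ (0 : ℝ), n x = n1) (hn2 : ∀ x ≥ d, n x = n2)
    (hk1 : 0 < k ^ 2 * n1 ^ 2 - beta ^ 2) (hk2 : 0 < k ^ 2 * n2 ^ 2 - beta ^ 2)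
    (y1 y2 : ℝ → ℂ)
    (hy1d : Differentiable ℝ y1) (hy1d2 : Differentiable ℝ (deriv y1))
    (hy1eq : ∀ x ∈ Set.Icc 0 d,
      deriv (deriv y1) x + ((k : ℂ) ^ 2 * (n x : ℂ) ^ 2 - (beta : ℂ) ^ 2) * y1 x = 0)
    (hy1i : y1 0 = 1) (hy1i' : deriv y1 0 = 0)
    (hy2d : Differentiable ℝ y2) (hy2d2 : Differentiable ℝ (deriv y2))
    (hy2eq : ∀ x ∈ Set.Icc 0 d,
      deriv (deriv y2) x + ((k : ℂ) ^ 2 * (n x : ℂ) ^ 2 - (beta : ℂ) ^ 2) * y2 x = 0)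
    (hy2i : y2 0 = 0) (hy2i' : deriv y2 0 = 1)
    (u : ℝ → ℂ) (R T : ℂ)
    (hud : Differentiable ℝ u) (hud2 : Differentiable ℝ (deriv u))
    (hueq : ∀ x : ℝ,
      deriv (deriv u) x + ((k : ℂ) ^ 2 * (n x : ℂ) ^ 2 - (beta : ℂ) ^ 2) * u x = 0)
    (huleft : ∀ x ≤ (0 : ℝ),
      u x = Complex.exp (-Complex.I * (Real.sqrt (k ^ 2 * n1 ^ 2 - beta ^ 2) : ℂ) * x) +
        R * Complex.exp (Complex.I * (Real.sqrt (k ^ 2 * n1 ^ 2 - beta ^ 2) : ℂ) * x))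
    (huright : ∀ x ≥ d,
      u x = T * Complex.exp (-Complex.I * (Real.sqrt (k ^ 2 * n2 ^ 2 - beta ^ 2) : ℂ) * x))
    (hden : (deriv y1 d -
        (Real.sqrt (k ^ 2 * n1 ^ 2 - beta ^ 2) : ℂ) *
          (Real.sqrt (k ^ 2 * n2 ^ 2 - beta ^ 2) : ℂ) * y2 d) +
      Complex.I * ((Real.sqrt (k ^ 2 * n2 ^ 2 - beta ^ 2) : ℂ) * y1 d +
        (Real.sqrt (k ^ 2 * n1 ^ 2 - beta ^ 2) : ℂ) * deriv y2 d) ≠ 0) :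
    R = (-(Real.sqrt (k ^ 2 * n1 ^ 2 - beta ^ 2) : ℂ) *
          (Real.sqrt (k ^ 2 * n2 ^ 2 - beta ^ 2) : ℂ) * y2 d - deriv y1 d -
          Complex.I * (Real.sqrt (k ^ 2 * n2 ^ 2 - beta ^ 2) : ℂ) * y1 d +
          Complex.I * (Real.sqrt (k ^ 2 * n1 ^ 2 - beta ^ 2) : ℂ) * deriv y2 d) /
        ((deriv y1 d -
          (Real.sqrt (k ^ 2 * n1 ^ 2 - beta ^ 2) : ℂ) *
            (Real.sqrt (k ^ 2 * n2 ^ 2 - beta ^ 2) : ℂ) * y2 d) +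
        Complex.I * ((Real.sqrt (k ^ 2 * n2 ^ 2 - beta ^ 2) : ℂ) * y1 d +
          (Real.sqrt (k ^ 2 * n1 ^ 2 - beta ^ 2) : ℂ) * deriv y2 d)) ∧
    T = 2 * Complex.I * (Real.sqrt (k ^ 2 * n1 ^ 2 - beta ^ 2) : ℂ) *
          (y1 d * deriv y2 d - deriv y1 d * y2 d) *
          Complex.exp (Complex.I * (Real.sqrt (k ^ 2 * n2 ^ 2 - beta ^ 2) : ℂ) * d) /
        ((deriv y1 d -
          (Real.sqrt (k ^ 2 * n1 ^ 2 - beta ^ 2) : ℂ) *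
            (Real.sqrt (k ^ 2 * n2 ^ 2 - beta ^ 2) : ℂ) * y2 d) +
        Complex.I * ((Real.sqrt (k ^ 2 * n2 ^ 2 - beta ^ 2) : ℂ) * y1 d +
          (Real.sqrt (k ^ 2 * n1 ^ 2 - beta ^ 2) : ℂ) * deriv y2 d)) :=
  reflection_transmission_coefficients_general k beta d n1 n2 hd n hn y1 y2 hy1d hy1d2 hy1eq hy1i
    hy1i' hy2d hy2d2 hy2eq hy2i hy2i' u R T hud hud2 hueq huleft huright hden
end

section
/- If v is a solution of the p-polarization equation n(x)² ( v'(x)/n(x)² )' + (k² n(x)² − β²) v(x) = 0, then the function U = v/n is a solution of the Helmholtz-type equation U''(x) + (k² N(x)² − β²) U(x) = 0, where k² N² = k² n² + n''/n − 2 (n'/n)². -/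
/-!
With `U = v / m` and `w = v' / m²` one has `U' = m w - (m'/m) U`, and differentiating once more,
`U'' = m w' - (m''/m - 2 (m'/m)²) U` for any nonvanishing, twice differentiable `m`.
The p-polarization equation says exactly that `m w' = -(k² m² - β²) U`.
-/

theorem deriv_ofReal_comp {f : ℝ → ℝ} (hf : Differentiable ℝ f) :
    deriv (fun x => (f x : ℂ)) = fun x => ((deriv f x : ℝ) : ℂ) :=
  funext fun x => (hf x).hasDerivAt.ofReal_comp.deriv

section DivisionByNonvanishing

variable {v m : ℝ → ℂ} {x : ℝ}

theorem hasDerivAt_div_eq_mul_sub (hv : DifferentiableAt ℝ v x) (hm : DifferentiableAt ℝ m x)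
    (hm0 : m x ≠ 0) :
    HasDerivAt (fun y => v y / m y)
      (m x * (deriv v x / m x ^ 2) - deriv m x / m x * (v x / m x)) x := by
  refine (hv.hasDerivAt.div hm.hasDerivAt hm0).congr_deriv ?_
  field_simp

theorem deriv_div_eq_mul_sub (hv : Differentiable ℝ v) (hm : Differentiable ℝ m)
    (hm0 : ∀ y, m y ≠ 0) :
    deriv (fun y => v y / m y) =
      fun y => m y * (deriv v y / m y ^ 2) - deriv m y / m y * (v y / m y) :=
  funext fun y => (hasDerivAt_div_eq_mul_sub (hv y) (hm y) (hm0 y)).deriv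

theorem hasDerivAt_deriv_div (hv : Differentiable ℝ v) (hm : Differentiable ℝ m)
    (hm0 : ∀ y, m y ≠ 0) (hw : DifferentiableAt ℝ (fun y => deriv v y / m y ^ 2) x)
    (hm' : DifferentiableAt ℝ (deriv m) x) :
    HasDerivAt (deriv fun y => v y / m y)
      (m x * deriv (fun y => deriv v y / m y ^ 2) x -
        (deriv (deriv m) x / m x - 2 * (deriv m x / m x) ^ 2) * (v x / m x)) x := by
  rw [deriv_div_eq_mul_sub hv hm hm0]
  have hU := hasDerivAt_div_eq_mul_sub (hv x) (hm x) (hm0 x)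
  have hlog := hm'.hasDerivAt.div (hm x).hasDerivAt (hm0 x)
  refine (((hm x).hasDerivAt.mul hw.hasDerivAt).sub (hlog.mul hU)).congr_deriv ?_
  simp only [Pi.div_apply]
  field_simp
  ring

end DivisionByNonvanishing

theorem p_polarization_to_helmholtz_general
    (k beta : ℝ)
    (n : ℝ → ℝ) (hn : ContDiff ℝ 2 n) (hnne : ∀ x, n x ≠ 0)
    (v : ℝ → ℂ) (hv : Differentiable ℝ v)
    (hv' : Differentiable ℝ (fun x => deriv v x / (n x : ℂ) ^ 2))
    (hveq : ∀ x : ℝ,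
      (n x : ℂ) ^ 2 * deriv (fun y => deriv v y / (n y : ℂ) ^ 2) x +
        ((k : ℂ) ^ 2 * (n x : ℂ) ^ 2 - (beta : ℂ) ^ 2) * v x = 0) :
    Differentiable ℝ (fun x => v x / (n x : ℂ)) ∧
    Differentiable ℝ (deriv (fun x => v x / (n x : ℂ))) ∧
    ∀ x : ℝ,
      deriv (deriv (fun y => v y / (n y : ℂ))) x +
        (((k : ℂ) ^ 2 * (n x : ℂ) ^ 2 +
            ((deriv (deriv n) x : ℝ) : ℂ) / (n x : ℂ) -
            2 * (((deriv n x : ℝ) : ℂ) / (n x : ℂ)) ^ 2) - (beta : ℂ) ^ 2) *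
          (v x / (n x : ℂ)) = 0 := by
  have hn1 : Differentiable ℝ n := hn.differentiable (by norm_num)
  have hn2 : Differentiable ℝ (deriv n) := hn.differentiable_deriv_two
  have hm : Differentiable ℝ fun x => (n x : ℂ) := Complex.differentiable_ofReal.comp hn1
  have hm0 : ∀ x, (n x : ℂ) ≠ 0 := fun x => Complex.ofReal_ne_zero.mpr (hnne x)
  have hm' : Differentiable ℝ (deriv fun x => (n x : ℂ)) := by
    rw [deriv_ofReal_comp hn1]
    exact Complex.differentiable_ofReal.comp hn2
  have hU'' x := hasDerivAt_deriv_div hv hm hm0 (hv' x) (hm' x)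
  refine ⟨hv.div hm hm0, fun x => (hU'' x).differentiableAt, fun x => ?_⟩
  rw [(hU'' x).deriv, deriv_ofReal_comp hn1, deriv_ofReal_comp hn2]
  have hnx := hm0 x
  field_simp
  linear_combination (n x : ℂ) ^ 2 * hveq x

theorem p_polarization_to_helmholtz
    (k beta : ℝ) (hk : 0 < k)
    (n : ℝ → ℝ) (hn : ContDiff ℝ 2 n) (hnne : ∀ x, n x ≠ 0)
    (v : ℝ → ℂ) (hv : Differentiable ℝ v)
    (hv' : Differentiable ℝ (fun x => deriv v x / (n x : ℂ) ^ 2))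
    (hveq : ∀ x : ℝ,
      (n x : ℂ) ^ 2 * deriv (fun y => deriv v y / (n y : ℂ) ^ 2) x +
        ((k : ℂ) ^ 2 * (n x : ℂ) ^ 2 - (beta : ℂ) ^ 2) * v x = 0) :
    Differentiable ℝ (fun x => v x / (n x : ℂ)) ∧
    Differentiable ℝ (deriv (fun x => v x / (n x : ℂ))) ∧
    ∀ x : ℝ,
      deriv (deriv (fun y => v y / (n y : ℂ))) x +
        (((k : ℂ) ^ 2 * (n x : ℂ) ^ 2 +
            ((deriv (deriv n) x : ℝ) : ℂ) / (n x : ℂ) -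
            2 * (((deriv n x : ℝ) : ℂ) / (n x : ℂ)) ^ 2) - (beta : ℂ) ^ 2) *
          (v x / (n x : ℂ)) = 0 :=
  p_polarization_to_helmholtz_general k beta n hn hnne v hv hv' hveq
end
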